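/- For all jointly distributed random variables A, B, X, Y with finite ranges, I(A:B) ≤ I(A:B | X) + I(A:B | Y) + Δ, where Δ = log₂( Σ_{a,b,x,y : p(a,b,x)>0 and p(a,b,y)>0} p(a,x)·p(a,y)·p(b,x)·p(b,y) / ( p(a)·p(x)·p(y)·p(b) ) ). -/

import Mathlib

open Finset

noncomputable section

/-- Probability of an event under a distribution on a finite sample space. -/
def pr {Ω : Type*} [Fintype Ω] (p : Ω → ℝ) (E : Set Ω) : ℝ :=
  ∑ ω, E.indicator p ω

/-- `p` is a probability mass function on the finite sample space `Ω`. -/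
def IsPMF {Ω : Type*} [Fintype Ω] (p : Ω → ℝ) : Prop :=
  (∀ ω, 0 ≤ p ω) ∧ ∑ ω, p ω = 1

/-- Shannon entropy (base 2) of a random variable `V` on a finite sample space. -/
def ent {Ω β : Type*} [Fintype Ω] [Fintype β] (p : Ω → ℝ) (V : Ω → β) : ℝ :=
  -∑ v, pr p {ω | V ω = v} * Real.logb 2 (pr p {ω | V ω = v})

/-- Conditional Shannon entropy (base 2): `H(V | W)`. -/
def condEnt {Ω β γ : Type*} [Fintype Ω] [Fintype β] [Fintype γ]
    (p : Ω → ℝ) (V : Ω → β) (W : Ω → γ) : ℝ :=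
  ent p (fun ω => (V ω, W ω)) - ent p W

/-- Mutual information (base 2): `I(V : W)`. -/
def mi {Ω β γ : Type*} [Fintype Ω] [Fintype β] [Fintype γ]
    (p : Ω → ℝ) (V : Ω → β) (W : Ω → γ) : ℝ :=
  ent p V + ent p W - ent p (fun ω => (V ω, W ω))

/-- Conditional mutual information (base 2): `I(V : W | U)`. -/
def cmi {Ω β γ δ : Type*} [Fintype Ω] [Fintype β] [Fintype γ] [Fintype δ]
    (p : Ω → ℝ) (V : Ω → β) (W : Ω → γ) (U : Ω → δ) : ℝ :=
  ent p (fun ω => (V ω, U ω)) + ent p (fun ω => (W ω, U ω))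
    - ent p (fun ω => (V ω, W ω, U ω)) - ent p U


/-!
`I(A:B) - I(A:B|X) - I(A:B|Y)` is the `p`-expectation of a pointwise log-ratio that splits into a
function of `(a,b,x)` plus a function of `(a,b,y)`. Such an expectation only sees the `(A,B,X)` and
`(A,B,Y)` marginals, so it may equally be taken under `q(a,b,x,y) = p(a,b,x) p(a,b,y) / p(a,b)`,
which makes `X` and `Y` conditionally independent given `(A,B)`. Under `q` the log-ratio is
`log (δ / q)` with `δ` the summand of `Δ`, and Jensen's inequality for the concave logarithm gives
`E_q log (δ / q) ≤ log Σ δ = Δ`.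
-/

open Real

section Probability

variable {Ω : Type*} [Fintype Ω] {p : Ω → ℝ}

lemma pr_nonneg (hp : ∀ ω, 0 ≤ p ω) (E : Set Ω) : 0 ≤ pr p E :=
  sum_nonneg fun ω _ => Set.indicator_nonneg (fun ω _ => hp ω) ω

lemma pr_mono (hp : ∀ ω, 0 ≤ p ω) {E F : Set Ω} (h : E ⊆ F) : pr p E ≤ pr p F :=
  sum_le_sum fun ω _ => Set.indicator_le_indicator_of_subset h hp ω

lemma pr_pos_of_subset (hp : ∀ ω, 0 ≤ p ω) {E F : Set Ω} (hE : 0 < pr p E) (h : E ⊆ F) :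
    0 < pr p F :=
  hE.trans_le (pr_mono hp h)

lemma sum_pr_mul {β : Type*} [Fintype β] (p : Ω → ℝ) (V : Ω → β) (f : β → ℝ) :
    ∑ v, pr p {ω | V ω = v} * f v = ∑ ω, p ω * f (V ω) := by
  classical
  simp only [pr, Set.indicator_apply, Set.mem_ofPred_eq, sum_mul, ite_mul, zero_mul]
  rw [sum_comm]
  simp

lemma sum_pr_and {β : Type*} [Fintype β] (p : Ω → ℝ) (P : Ω → Prop) (V : Ω → β) :
    ∑ v, pr p {ω | P ω ∧ V ω = v} = pr p {ω | P ω} := by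
  classical
  simp only [pr, Set.indicator_apply, Set.mem_ofPred_eq]
  rw [sum_comm]
  refine sum_congr rfl fun ω _ => ?_
  by_cases h : P ω <;> simp [h]

lemma ent_eq_sum {β : Type*} [Fintype β] (p : Ω → ℝ) (V : Ω → β) :
    ent p V = -∑ ω, p ω * logb 2 (pr p {ω' | V ω' = V ω}) := by
  rw [ent, sum_pr_mul p V fun v => logb 2 (pr p {ω | V ω = v})]

end Probability

section Information

variable {Ω α β χ : Type*} [Fintype Ω] [Fintype α] [Fintype β] [Fintype χ]

def pmi (p : Ω → ℝ) (A : Ω → α) (B : Ω → β) (a : α) (b : β) : ℝ :=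
  logb 2 (pr p {ω | A ω = a ∧ B ω = b}) - logb 2 (pr p {ω | A ω = a})
    - logb 2 (pr p {ω | B ω = b})

def condPmi (p : Ω → ℝ) (A : Ω → α) (B : Ω → β) (X : Ω → χ) (a : α) (b : β) (x : χ) : ℝ :=
  logb 2 (pr p {ω | A ω = a ∧ B ω = b ∧ X ω = x}) + logb 2 (pr p {ω | X ω = x})
    - logb 2 (pr p {ω | A ω = a ∧ X ω = x}) - logb 2 (pr p {ω | B ω = b ∧ X ω = x})

lemma mi_eq_sum_pmi (p : Ω → ℝ) (A : Ω → α) (B : Ω → β) :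
    mi p A B = ∑ ω, p ω * pmi p A B (A ω) (B ω) := by
  simp only [mi, ent_eq_sum, pmi, Prod.mk.injEq, mul_sub, sum_sub_distrib]
  ring

lemma cmi_eq_sum_condPmi (p : Ω → ℝ) (A : Ω → α) (B : Ω → β) (X : Ω → χ) :
    cmi p A B X = ∑ ω, p ω * condPmi p A B X (A ω) (B ω) (X ω) := by
  simp only [cmi, ent_eq_sum, condPmi, Prod.mk.injEq, mul_add, mul_sub, sum_add_distrib,
    sum_sub_distrib]
  ring

end Information

section Coupling

variable {Ω α β χ υ : Type*} [Fintype Ω]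
  {p : Ω → ℝ} {A : Ω → α} {B : Ω → β} {X : Ω → χ} {Y : Ω → υ}

/-- Where `p(a,b) = 0` this is `0`, through `x / 0 = 0`. -/
def condIndepLaw (p : Ω → ℝ) (A : Ω → α) (B : Ω → β) (X : Ω → χ) (Y : Ω → υ)
    (a : α) (b : β) (x : χ) (y : υ) : ℝ :=
  pr p {ω | A ω = a ∧ B ω = b ∧ X ω = x} * pr p {ω | A ω = a ∧ B ω = b ∧ Y ω = y}
    / pr p {ω | A ω = a ∧ B ω = b}

lemma condIndepLaw_nonneg (hp : ∀ ω, 0 ≤ p ω) (a : α) (b : β) (x : χ) (y : υ) :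
    0 ≤ condIndepLaw p A B X Y a b x y :=
  div_nonneg (mul_nonneg (pr_nonneg hp _) (pr_nonneg hp _)) (pr_nonneg hp _)

lemma condIndepLaw_pos_iff (hp : ∀ ω, 0 ≤ p ω) {a : α} {b : β} {x : χ} {y : υ} :
    0 < condIndepLaw p A B X Y a b x y ↔
      0 < pr p {ω | A ω = a ∧ B ω = b ∧ X ω = x} ∧ 0 < pr p {ω | A ω = a ∧ B ω = b ∧ Y ω = y} := by
  refine ⟨fun hq => ?_, fun ⟨habx, haby⟩ => ?_⟩
  · have hne := hq.ne'
    simp only [condIndepLaw, ne_eq, div_eq_zero_iff, mul_eq_zero, not_or] at hne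
    exact ⟨(pr_nonneg hp _).lt_of_ne' hne.1.1, (pr_nonneg hp _).lt_of_ne' hne.1.2⟩
  · exact div_pos (mul_pos habx haby) (pr_pos_of_subset hp habx fun ω h => ⟨h.1, h.2.1⟩)

lemma sum_condIndepLaw_right [Fintype υ] (hp : ∀ ω, 0 ≤ p ω) (a : α) (b : β) (x : χ) :
    ∑ y, condIndepLaw p A B X Y a b x y = pr p {ω | A ω = a ∧ B ω = b ∧ X ω = x} := by
  have hmarg : ∑ y, pr p {ω | A ω = a ∧ B ω = b ∧ Y ω = y} = pr p {ω | A ω = a ∧ B ω = b} := by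
    simpa only [and_assoc] using sum_pr_and p (fun ω => A ω = a ∧ B ω = b) Y
  simp only [condIndepLaw, ← sum_div, ← mul_sum, hmarg]
  rcases (pr_nonneg hp {ω | A ω = a ∧ B ω = b}).eq_or_lt with hab | hab
  · have habx : pr p {ω | A ω = a ∧ B ω = b ∧ X ω = x} = 0 :=
      le_antisymm (hab ▸ pr_mono hp fun ω h => ⟨h.1, h.2.1⟩) (pr_nonneg hp _)
    rw [habx, zero_mul, zero_div]
  · exact mul_div_cancel_right₀ _ hab.ne'

lemma sum_condIndepLaw_left [Fintype χ] (hp : ∀ ω, 0 ≤ p ω) (a : α) (b : β) (y : υ) :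
    ∑ x, condIndepLaw p A B X Y a b x y = pr p {ω | A ω = a ∧ B ω = b ∧ Y ω = y} := by
  simp only [condIndepLaw, mul_comm (pr p {ω | A ω = a ∧ B ω = b ∧ X ω = _})]
  exact sum_condIndepLaw_right (X := Y) (Y := X) hp a b y

lemma sum_mul_eq_sum_pr_mul [Fintype α] [Fintype β] [Fintype χ] (p : Ω → ℝ) (A : Ω → α)
    (B : Ω → β) (X : Ω → χ) (g : α → β → χ → ℝ) :
    ∑ ω, p ω * g (A ω) (B ω) (X ω)
      = ∑ a, ∑ b, ∑ x, pr p {ω | A ω = a ∧ B ω = b ∧ X ω = x} * g a b x := by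
  have h := sum_pr_mul p (fun ω => (A ω, B ω, X ω)) fun v => g v.1 v.2.1 v.2.2
  simp only [Fintype.sum_prod_type, Prod.mk.injEq] at h
  exact h.symm

lemma sum_mul_eq_sum_condIndepLaw_mul_left [Fintype α] [Fintype β] [Fintype χ] [Fintype υ]
    (hp : ∀ ω, 0 ≤ p ω) (g : α → β → χ → ℝ) :
    ∑ ω, p ω * g (A ω) (B ω) (X ω)
      = ∑ a, ∑ b, ∑ x, ∑ y, condIndepLaw p A B X Y a b x y * g a b x := by
  rw [sum_mul_eq_sum_pr_mul]
  simp only [← sum_condIndepLaw_right (Y := Y) hp, sum_mul]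

lemma sum_mul_eq_sum_condIndepLaw_mul_right [Fintype α] [Fintype β] [Fintype χ] [Fintype υ]
    (hp : ∀ ω, 0 ≤ p ω) (g : α → β → υ → ℝ) :
    ∑ ω, p ω * g (A ω) (B ω) (Y ω)
      = ∑ a, ∑ b, ∑ x, ∑ y, condIndepLaw p A B X Y a b x y * g a b y := by
  rw [sum_mul_eq_sum_pr_mul]
  simp only [← sum_condIndepLaw_left (X := X) hp, sum_mul]
  exact sum_congr rfl fun a _ => sum_congr rfl fun b _ => sum_comm

end Coupling

lemma sum_mul_logb_le_logb_sum_mul {ι : Type*} [Fintype ι] {w t : ι → ℝ} (hw0 : ∀ i, 0 ≤ w i)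
    (hw1 : ∑ i, w i = 1) (ht : ∀ i, w i ≠ 0 → 0 < t i) :
    ∑ i, w i * logb 2 (t i) ≤ logb 2 (∑ i, w i * t i) := by
  classical
  set S := univ.filter fun i => w i ≠ 0
  have hS (f : ι → ℝ) : ∑ i ∈ S, w i * f i = ∑ i, w i * f i :=
    sum_filter_of_ne fun _ _ h => left_ne_zero_of_mul h
  have hjensen := strictConcaveOn_log_Ioi.concaveOn.le_map_sum (t := S) (w := w) (p := t)
    (fun i _ => hw0 i) ((sum_filter_ne_zero _).trans hw1) fun i hi => ht i (mem_filter.1 hi).2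
  simp only [smul_eq_mul, hS] at hjensen
  simp only [logb, ← mul_div_assoc, ← sum_div]
  exact div_le_div_of_nonneg_right hjensen (log_nonneg one_le_two)

section Delta

variable {Ω α β χ υ : Type*} [Fintype Ω]
  {p : Ω → ℝ} {A : Ω → α} {B : Ω → β} {X : Ω → χ} {Y : Ω → υ}

open scoped Classical in
def deltaSummand (p : Ω → ℝ) (A : Ω → α) (B : Ω → β) (X : Ω → χ) (Y : Ω → υ)
    (a : α) (b : β) (x : χ) (y : υ) : ℝ :=
  if 0 < pr p {ω | A ω = a ∧ B ω = b ∧ X ω = x} ∧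
     0 < pr p {ω | A ω = a ∧ B ω = b ∧ Y ω = y} then
    pr p {ω | A ω = a ∧ X ω = x} * pr p {ω | A ω = a ∧ Y ω = y}
      * pr p {ω | B ω = b ∧ X ω = x} * pr p {ω | B ω = b ∧ Y ω = y}
      / (pr p {ω | A ω = a} * pr p {ω | X ω = x} * pr p {ω | Y ω = y}
          * pr p {ω | B ω = b})
  else 0

lemma pr_marginals_pos {γ : Type*} (hp : ∀ ω, 0 ≤ p ω) {X : Ω → γ} {a : α} {b : β} {x : γ}
    (habx : 0 < pr p {ω | A ω = a ∧ B ω = b ∧ X ω = x}) :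
    0 < pr p {ω | A ω = a ∧ B ω = b} ∧ 0 < pr p {ω | A ω = a} ∧ 0 < pr p {ω | B ω = b} ∧
      0 < pr p {ω | X ω = x} ∧ 0 < pr p {ω | A ω = a ∧ X ω = x} ∧
      0 < pr p {ω | B ω = b ∧ X ω = x} :=
  ⟨pr_pos_of_subset hp habx fun _ h => ⟨h.1, h.2.1⟩, pr_pos_of_subset hp habx fun _ h => h.1,
    pr_pos_of_subset hp habx fun _ h => h.2.1, pr_pos_of_subset hp habx fun _ h => h.2.2,
    pr_pos_of_subset hp habx fun _ h => ⟨h.1, h.2.2⟩,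
    pr_pos_of_subset hp habx fun _ h => ⟨h.2.1, h.2.2⟩⟩

lemma deltaSummand_pos (hp : ∀ ω, 0 ≤ p ω) {a : α} {b : β} {x : χ} {y : υ}
    (habx : 0 < pr p {ω | A ω = a ∧ B ω = b ∧ X ω = x})
    (haby : 0 < pr p {ω | A ω = a ∧ B ω = b ∧ Y ω = y}) :
    0 < deltaSummand p A B X Y a b x y := by
  obtain ⟨-, ha, hb, hx, hax, hbx⟩ := pr_marginals_pos hp habx
  obtain ⟨-, -, -, hy, hay, hby⟩ := pr_marginals_pos hp haby
  rw [deltaSummand, if_pos ⟨habx, haby⟩]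
  positivity

lemma pmi_sub_condPmi_sub_condPmi_eq_logb (hp : ∀ ω, 0 ≤ p ω) {a : α} {b : β} {x : χ} {y : υ}
    (habx : 0 < pr p {ω | A ω = a ∧ B ω = b ∧ X ω = x})
    (haby : 0 < pr p {ω | A ω = a ∧ B ω = b ∧ Y ω = y}) :
    pmi p A B a b - condPmi p A B X a b x - condPmi p A B Y a b y
      = logb 2 (deltaSummand p A B X Y a b x y / condIndepLaw p A B X Y a b x y) := by
  obtain ⟨hab, ha, hb, hx, hax, hbx⟩ := pr_marginals_pos hp habx
  obtain ⟨-, -, -, hy, hay, hby⟩ := pr_marginals_pos hp haby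
  simp only [deltaSummand, condIndepLaw, if_pos (And.intro habx haby)]
  simp only [logb_div, logb_mul, ne_eq, mul_eq_zero, div_eq_zero_iff, or_self, not_false_eq_true,
    hab.ne', ha.ne', hb.ne', hx.ne', hy.ne', hax.ne', hbx.ne', hay.ne', hby.ne', habx.ne',
    haby.ne', pmi, condPmi]
  ring

lemma condIndepLaw_mul_div_eq_deltaSummand (hp : ∀ ω, 0 ≤ p ω) (a : α) (b : β) (x : χ) (y : υ) :
    condIndepLaw p A B X Y a b x y
      * (deltaSummand p A B X Y a b x y / condIndepLaw p A B X Y a b x y)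
      = deltaSummand p A B X Y a b x y := by
  rcases (condIndepLaw_nonneg hp a b x y).eq_or_lt with hq | hq
  · rw [← hq, zero_mul, deltaSummand, if_neg ((condIndepLaw_pos_iff hp).not.1 hq.not_lt)]
  · exact mul_div_cancel₀ _ hq.ne'

end Delta

section Main

variable {Ω α β χ υ : Type*} [Fintype Ω] [Fintype α] [Fintype β] [Fintype χ] [Fintype υ]
  {p : Ω → ℝ} {A : Ω → α} {B : Ω → β} {X : Ω → χ} {Y : Ω → υ}

lemma mi_sub_cmi_sub_cmi_eq_sum (hp : ∀ ω, 0 ≤ p ω) :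
    mi p A B - cmi p A B X - cmi p A B Y
      = ∑ a, ∑ b, ∑ x, ∑ y, condIndepLaw p A B X Y a b x y
          * logb 2 (deltaSummand p A B X Y a b x y / condIndepLaw p A B X Y a b x y) := by
  rw [mi_eq_sum_pmi, cmi_eq_sum_condPmi, cmi_eq_sum_condPmi,
    sum_mul_eq_sum_condIndepLaw_mul_left (X := X) (Y := Y) hp fun a b _ => pmi p A B a b,
    sum_mul_eq_sum_condIndepLaw_mul_left (Y := Y) hp,
    sum_mul_eq_sum_condIndepLaw_mul_right (X := X) hp]
  simp only [← sum_sub_distrib, ← mul_sub]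
  refine sum_congr rfl fun a _ => sum_congr rfl fun b _ => sum_congr rfl fun x _ =>
    sum_congr rfl fun y _ => ?_
  rcases (condIndepLaw_nonneg hp a b x y).eq_or_lt with hq | hq
  · rw [← hq, zero_mul, zero_mul]
  · obtain ⟨habx, haby⟩ := (condIndepLaw_pos_iff hp).1 hq
    rw [pmi_sub_condPmi_sub_condPmi_eq_logb hp habx haby]

lemma mi_sub_cmi_sub_cmi_le_logb_sum_deltaSummand (hp : IsPMF p) :
    mi p A B - cmi p A B X - cmi p A B Y
      ≤ logb 2 (∑ a, ∑ b, ∑ x, ∑ y, deltaSummand p A B X Y a b x y) := by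
  obtain ⟨hp0, hp1⟩ := hp
  have hq1 : ∑ a, ∑ b, ∑ x, ∑ y, condIndepLaw p A B X Y a b x y = 1 := by
    simpa [hp1] using
      (sum_mul_eq_sum_condIndepLaw_mul_left (X := X) (Y := Y) hp0 fun _ _ _ => (1 : ℝ)).symm
  have hjensen := sum_mul_logb_le_logb_sum_mul
    (w := fun v : α × β × χ × υ => condIndepLaw p A B X Y v.1 v.2.1 v.2.2.1 v.2.2.2)
    (t := fun v => deltaSummand p A B X Y v.1 v.2.1 v.2.2.1 v.2.2.2
      / condIndepLaw p A B X Y v.1 v.2.1 v.2.2.1 v.2.2.2)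
    (fun _ => condIndepLaw_nonneg hp0 _ _ _ _) (by simpa only [Fintype.sum_prod_type] using hq1)
    fun _ hq => by
      have hq := (condIndepLaw_nonneg hp0 _ _ _ _).lt_of_ne' hq
      obtain ⟨habx, haby⟩ := (condIndepLaw_pos_iff hp0).1 hq
      exact div_pos (deltaSummand_pos hp0 habx haby) hq
  simp only [Fintype.sum_prod_type, condIndepLaw_mul_div_eq_deltaSummand hp0] at hjensen
  rwa [mi_sub_cmi_sub_cmi_eq_sum hp0]

end Main

open scoped Classical in
/-- Unconditional version of [ZY97] with error term `Δ`. -/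
theorem stmt_5 {Ω α β χ υ : Type*}
    [Fintype Ω] [Fintype α] [Fintype β] [Fintype χ] [Fintype υ]
    (p : Ω → ℝ) (hp : IsPMF p)
    (A : Ω → α) (B : Ω → β) (X : Ω → χ) (Y : Ω → υ) :
    mi p A B ≤ cmi p A B X + cmi p A B Y +
      Real.logb 2 (∑ a : α, ∑ b : β, ∑ x : χ, ∑ y : υ,
        if 0 < pr p {ω | A ω = a ∧ B ω = b ∧ X ω = x} ∧
           0 < pr p {ω | A ω = a ∧ B ω = b ∧ Y ω = y} then
          pr p {ω | A ω = a ∧ X ω = x} * pr p {ω | A ω = a ∧ Y ω = y}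
            * pr p {ω | B ω = b ∧ X ω = x} * pr p {ω | B ω = b ∧ Y ω = y}
            / (pr p {ω | A ω = a} * pr p {ω | X ω = x} * pr p {ω | Y ω = y}
                * pr p {ω | B ω = b})
        else 0) := by
  have h := mi_sub_cmi_sub_cmi_le_logb_sum_deltaSummand (A := A) (B := B) (X := X) (Y := Y) hp
  unfold deltaSummand at h
  linarith
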